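/- The Hankel determinant of weighted Motzkin numbers det(M_{i+j;ω})_{0≤i,j≤n} equals 1 for every n ≥ 0 and every weight ω. -/

import Mathlib

open scoped BigOperators

/-- Weighted count of Motzkin-type paths from (0,0) to (n,j): steps (1,1),(1,-1),(1,0),
horizontal steps weighted ω, staying weakly above the x-axis. -/
def motzkinM (ω : ℚ) : ℕ → ℤ → ℚ
  | 0, j => if j = 0 then 1 else 0
  | n+1, j => if j < 0 then 0 else
      motzkinM ω n (j-1) + ω * motzkinM ω n j + motzkinM ω n (j+1)

/-!
Let `S f k = f (k - 1) + ω f k + f (k + 1)` be the Jacobi step. For `k ≥ 0` the row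
`M_{n+1}(·)` of path counts by final height is `S M_n`, and `S` is symmetric for the pairing
`⟨f, g⟩ = ∑_{k ≥ 0} f k g k` on functions vanishing at `-1`. Hence `⟨M_i, M_j⟩` depends only
on `i + j`, so it equals `⟨M_{i+j}, M_0⟩ = M_{i+j}(0)`. The Hankel matrix is therefore `A Aᵀ`
with `A i k = M_i(k)`, which is lower unitriangular since a path of length `i` ends at height
at most `i`, and exactly one reaches height `i`.
-/

open Finset Matrix

section Shift

variable {R : Type*}

theorem sum_range_mul_comp_sub_one [Semiring R] (f g : ℤ → R) {N : ℕ}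
    (hg : g (-1) = 0) (hf : f N = 0) :
    ∑ k ∈ range N, f k * g (k - 1) = ∑ k ∈ range N, f (k + 1) * g k := by
  cases N with
  | zero => simp
  | succ N =>
    rw [sum_range_succ', sum_range_succ]
    push_cast at hf ⊢
    simp [hg, hf]

def motzkinStep [Semiring R] (ω : R) (f : ℤ → R) (k : ℤ) : R :=
  f (k - 1) + ω * f k + f (k + 1)

theorem sum_range_mul_motzkinStep_comm [CommSemiring R] (ω : R) {f g : ℤ → R} {N : ℕ}
    (hf : f (-1) = 0) (hg : g (-1) = 0) (hfN : f N = 0) (hgN : g N = 0) :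
    ∑ k ∈ range N, f k * motzkinStep ω g k = ∑ k ∈ range N, motzkinStep ω f k * g k := by
  have down := sum_range_mul_comp_sub_one f g hg hfN
  have up := sum_range_mul_comp_sub_one g f hf hgN
  simp only [mul_comm (g _)] at up
  have middle : ∑ k ∈ range N, f k * (ω * g k) = ∑ k ∈ range N, ω * f k * g k :=
    sum_congr rfl fun k _ => by ring
  simp only [motzkinStep, mul_add, add_mul, sum_add_distrib, down, ← up, middle]
  ring

end Shift

section Motzkin

variable (ω : ℚ)

theorem motzkinM_of_neg {n : ℕ} {k : ℤ} (hk : k < 0) : motzkinM ω n k = 0 := by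
  cases n with
  | zero => simp [motzkinM, hk.ne]
  | succ n => simp [motzkinM, hk]

theorem motzkinM_succ_of_nonneg {n : ℕ} {k : ℤ} (hk : 0 ≤ k) :
    motzkinM ω (n + 1) k = motzkinStep ω (motzkinM ω n) k := by
  simp [motzkinM, motzkinStep, not_lt.2 hk]

theorem motzkinM_of_lt {n : ℕ} {k : ℤ} (h : n < k) : motzkinM ω n k = 0 := by
  induction n generalizing k with
  | zero => simp only [motzkinM, if_neg (show k ≠ 0 by omega)]
  | succ n ih =>
    rw [motzkinM_succ_of_nonneg ω (by omega), motzkinStep, ih (by omega), ih (by omega),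
      ih (by omega)]
    ring

theorem motzkinM_self (n : ℕ) : motzkinM ω n n = 1 := by
  induction n with
  | zero => simp [motzkinM]
  | succ n ih =>
    rw [motzkinM_succ_of_nonneg ω (by omega), motzkinStep, Nat.cast_succ, add_sub_cancel_right,
      ih, motzkinM_of_lt ω (by omega), motzkinM_of_lt ω (by omega)]
    ring

theorem motzkinM_add_eq_sum_of_add_lt (i j : ℕ) {N : ℕ} (h : i + j < N) :
    motzkinM ω (i + j) 0 = ∑ k ∈ range N, motzkinM ω i k * motzkinM ω j k := by
  induction j generalizing i with
  | zero =>
    rw [sum_eq_single_of_mem 0 (mem_range.2 (by omega))]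
    · simp [motzkinM]
    · intro k _ hk
      simp [motzkinM, hk]
  | succ j ih =>
    have hstep : ∀ m : ℕ, ∀ k : ℕ, motzkinM ω (m + 1) k = motzkinStep ω (motzkinM ω m) k :=
      fun m k => motzkinM_succ_of_nonneg ω k.cast_nonneg
    rw [← add_assoc, add_right_comm, ih (i + 1) (by omega)]
    simp only [hstep]
    exact (sum_range_mul_motzkinStep_comm ω (motzkinM_of_neg ω (by norm_num))
      (motzkinM_of_neg ω (by norm_num)) (motzkinM_of_lt ω (by omega))
      (motzkinM_of_lt ω (by omega))).symm

theorem motzkinM_add_eq_sum (i j : ℕ) {N : ℕ} (hi : i < N) :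
    motzkinM ω (i + j) 0 = ∑ k ∈ range N, motzkinM ω i k * motzkinM ω j k := by
  rw [motzkinM_add_eq_sum_of_add_lt ω i j (N := N + j) (by omega)]
  refine eventually_constant_sum (fun k hk => ?_) (by omega)
  rw [motzkinM_of_lt ω (by omega), zero_mul]

end Motzkin

theorem motzkin_hankel_det_one (ω : ℚ) (n : ℕ) :
    Matrix.det (Matrix.of fun i j : Fin (n+1) => motzkinM ω (i.val + j.val) 0) = 1 := by
  set A : Matrix (Fin (n + 1)) (Fin (n + 1)) ℚ := of fun i k => motzkinM ω i k
  have hankel_eq : (of fun i j : Fin (n + 1) => motzkinM ω (i.val + j.val) 0) = A * Aᵀ := by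
    ext i j
    rw [of_apply, motzkinM_add_eq_sum ω i j i.isLt, mul_apply,
      ← Fin.sum_univ_eq_sum_range (fun k => motzkinM ω i k * motzkinM ω j k)]
    rfl
  have hA : A.det = 1 := by
    rw [det_of_isLowerTriangular A fun i k hik => motzkinM_of_lt ω (by simpa using hik)]
    exact prod_eq_one fun i _ => motzkinM_self ω i
  rw [hankel_eq, det_mul, det_transpose, hA, one_mul]
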